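/- arXiv:2410.09900 — 2 statements merged into one kernel-verified Lean document; each statement's English description precedes it below -/
import Mathlib

section
/- With the expected values E_{00} = E_{01} = (2^{n-1}-α)/(√2 s) and E_{10} = -E_{11} = α/(√2 s) where s = √((2^{n-2}-α)² + 2^{2(n-2)}), and biases p_0 = 1 - α/2^{n-1}, p_1 = α/2^{n-1}, q_0 = q_1 = 1/2, the value p_0 q_0 E_{00} + p_0 q_1 E_{01} + p_1 q_0 E_{10} - p_1 q_1 E_{11} equals √2·√((2^{n-2}-α)² + 2^{2(n-2)})/2^{n-1}. -/
/-!
With `m = 2 ^ (n - 1)` and `c = √2 · s`, the biased sum is `((m - α)² + α²) / (m c)`. Since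
`m = 2t` with `t = 2 ^ (n - 2)`, the identity `(2t - α)² + α² = 2((t - α)² + t²)` says that
the numerator is `c²`, so the sum is `c / m`.
-/

lemma biasedCHSH_sum_eq_div {m α c : ℝ} (hm : m ≠ 0) (hc : c ≠ 0)
    (hsq : (m - α) ^ 2 + α ^ 2 = c ^ 2) :
    (1 - α / m) * (1 / 2) * ((m - α) / c) + (1 - α / m) * (1 / 2) * ((m - α) / c)
      + (α / m) * (1 / 2) * (α / c) - (α / m) * (1 / 2) * -(α / c) = c / m := by
  field_simp
  linear_combination (2 : ℝ) * hsq

lemma two_mul_sub_sq_add_sq (t α : ℝ) :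
    (2 * t - α) ^ 2 + α ^ 2 = 2 * ((t - α) ^ 2 + t ^ 2) := by
  ring

theorem protocol1_value_general (n : ℕ) (hn : 2 ≤ n) (α : ℝ) :
    let s : ℝ := Real.sqrt ((2 ^ (n - 2) - α) ^ 2 + 2 ^ (2 * (n - 2)))
    let E00 : ℝ := (2 ^ (n - 1) - α) / (Real.sqrt 2 * s)
    let E01 : ℝ := (2 ^ (n - 1) - α) / (Real.sqrt 2 * s)
    let E10 : ℝ := α / (Real.sqrt 2 * s)
    let E11 : ℝ := -(α / (Real.sqrt 2 * s))
    (1 - α / 2 ^ (n - 1)) * (1 / 2) * E00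
      + (1 - α / 2 ^ (n - 1)) * (1 / 2) * E01
      + (α / 2 ^ (n - 1)) * (1 / 2) * E10
      - (α / 2 ^ (n - 1)) * (1 / 2) * E11
      = Real.sqrt 2 * s / 2 ^ (n - 1) := by
  intro s E00 E01 E10 E11
  have hs_sq : s ^ 2 = (2 ^ (n - 2) - α) ^ 2 + (2 ^ (n - 2)) ^ 2 := by
    rw [Real.sq_sqrt (by positivity), pow_mul']
  have hm : (2 : ℝ) ^ (n - 1) = 2 * 2 ^ (n - 2) := by
    rw [← pow_succ', show n - 2 + 1 = n - 1 by omega]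
  refine biasedCHSH_sum_eq_div (by positivity) (by positivity) ?_
  rw [mul_pow, Real.sq_sqrt zero_le_two, hs_sq, hm, two_mul_sub_sq_add_sq]

/-- The quantum value achieved by Protocol 1 for the biased CHSH game from the
`(n-1,1)`-grouped THRESHOLD game. -/
theorem protocol1_value (n : ℕ) (hn : 2 ≤ n) (α : ℝ)
    (h0 : 0 ≤ α) (h1 : α ≤ 2 ^ (n - 1))
    (hs : (0 : ℝ) < (2 ^ (n - 2) - α) ^ 2 + 2 ^ (2 * (n - 2))) :
    let s : ℝ := Real.sqrt ((2 ^ (n - 2) - α) ^ 2 + 2 ^ (2 * (n - 2)))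
    let E00 : ℝ := (2 ^ (n - 1) - α) / (Real.sqrt 2 * s)
    let E01 : ℝ := (2 ^ (n - 1) - α) / (Real.sqrt 2 * s)
    let E10 : ℝ := α / (Real.sqrt 2 * s)
    let E11 : ℝ := -(α / (Real.sqrt 2 * s))
    (1 - α / 2 ^ (n - 1)) * (1 / 2) * E00
      + (1 - α / 2 ^ (n - 1)) * (1 / 2) * E01
      + (α / 2 ^ (n - 1)) * (1 / 2) * E10
      - (α / 2 ^ (n - 1)) * (1 / 2) * E11
      = Real.sqrt 2 * s / 2 ^ (n - 1) :=
  protocol1_value_general n hn α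
end

section
/- Let n be even, t = n/2, k even with 2 ≤ k ≤ n/2, μ_j = C(n-k, j), w_j = C(k, j). Then 2^k(Σ_{i=0}^{t-k-1} μ_i + Σ_{i=t}^{n-k} μ_i) + μ_{t-k}Σ_{j=1}^{k-1} w_j - Σ_{i=1}^{k-1} μ_{t-i}(Σ_{j=0}^{i-1} w_j - Σ_{j=i}^{k} w_j) = 2^n - 2μ_{t-k} - 2Σ_{i=1}^{k-1} μ_{t-i}(Σ_{j=0}^{i-1} w_j). -/
open Finset

/-! Since `∑_{j<i} w_j + ∑_{j=i}^{k} w_j = 2^k`, the `i`-th bracket on the left equals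
`2 ∑_{j<i} w_j - 2^k`, and `∑_{j=1}^{k-1} w_j = 2^k - 2`. What remains multiplies `2^k` by
`∑_{i<t-k} μ_i + ∑_{i=1}^{k} μ_{t-i} + ∑_{i=t}^{n-k} μ_i`, and the middle sum fills exactly the gap
`[t-k, t)`, so this is `2^k · 2^(n-k) = 2^n`. -/

theorem Finset.sum_range_add_sum_Icc {M : Type*} [AddCommMonoid M] (f : ℕ → M) {i k : ℕ}
    (h : i ≤ k + 1) :
    ∑ j ∈ range i, f j + ∑ j ∈ Icc i k, f j = ∑ j ∈ range (k + 1), f j := by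
  rw [← Ico_add_one_right_eq_Icc, sum_range_add_sum_Ico f h]

theorem Finset.sum_Icc_one_reflect {M : Type*} [AddCommMonoid M] (f : ℕ → M) {k t : ℕ}
    (h : k ≤ t) : ∑ i ∈ Icc 1 k, f (t - i) = ∑ j ∈ Ico (t - k) t, f j := by
  rw [← Ico_add_one_right_eq_Icc, sum_Ico_reflect f 1 (by omega)]
  congr 2
  omega

theorem Finset.sum_range_add_sum_Ico_add_sum_Icc {M : Type*} [AddCommMonoid M] (f : ℕ → M)
    {a b c : ℕ} (hab : a ≤ b) (hbc : b ≤ c + 1) :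
    ∑ j ∈ range a, f j + ∑ j ∈ Ico a b, f j + ∑ j ∈ Icc b c, f j
      = ∑ j ∈ range (c + 1), f j := by
  rw [sum_range_add_sum_Ico f hab, sum_range_add_sum_Icc f hbc]

theorem Nat.sum_range_add_sum_Icc_choose {i k : ℕ} (h : i ≤ k + 1) :
    ∑ j ∈ range i, k.choose j + ∑ j ∈ Icc i k, k.choose j = 2 ^ k := by
  rw [sum_range_add_sum_Icc _ h, sum_range_choose]

theorem Nat.sum_Icc_one_sub_one_choose_add_two {k : ℕ} (hk : 1 ≤ k) :
    ∑ j ∈ Icc 1 (k - 1), k.choose j + 2 = 2 ^ k := by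
  obtain ⟨k, rfl⟩ := Nat.exists_eq_add_of_le' hk
  rw [← sum_range_choose, sum_range_succ, sum_range_eq_add_Ico _ (by omega),
    ← Ico_add_one_right_eq_Icc]
  simp only [Nat.add_sub_cancel, choose_zero_right, choose_self]
  ring

theorem majority_classical_identity_general (n k : ℕ)
    (h2 : 2 ≤ k) (hkn : 2 * k ≤ n) :
    let t := n / 2
    let μ : ℕ → ℤ := fun j => (Nat.choose (n - k) j : ℤ)
    let w : ℕ → ℤ := fun j => (Nat.choose k j : ℤ)
    2 ^ k * ((∑ i ∈ range (t - k), μ i) + ∑ i ∈ Icc t (n - k), μ i)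
      + μ (t - k) * ∑ j ∈ Icc 1 (k - 1), w j
      - ∑ i ∈ Icc 1 (k - 1), μ (t - i) *
          ((∑ j ∈ range i, w j) - ∑ j ∈ Icc i k, w j)
      = 2 ^ n - 2 * μ (t - k)
        - 2 * ∑ i ∈ Icc 1 (k - 1), μ (t - i) * ∑ j ∈ range i, w j := by
  intro t μ w
  have hkt : k ≤ t := by omega
  have hpairs : ∑ i ∈ Icc 1 (k - 1), μ (t - i) * ((∑ j ∈ range i, w j) - ∑ j ∈ Icc i k, w j)
      = 2 * ∑ i ∈ Icc 1 (k - 1), μ (t - i) * ∑ j ∈ range i, w j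
        - 2 ^ k * ∑ i ∈ Icc 1 (k - 1), μ (t - i) := by
    rw [mul_sum, mul_sum, ← sum_sub_distrib]
    refine sum_congr rfl fun i hi => ?_
    have hsplit : ∑ j ∈ range i, w j + ∑ j ∈ Icc i k, w j = 2 ^ k := by
      simp only [w]
      exact_mod_cast Nat.sum_range_add_sum_Icc_choose (by grind)
    linear_combination (-μ (t - i)) * hsplit
  have hinner : ∑ j ∈ Icc 1 (k - 1), w j + 2 = 2 ^ k := by
    simp only [w]
    exact_mod_cast Nat.sum_Icc_one_sub_one_choose_add_two (by omega)
  have hwindow : ∑ i ∈ Icc 1 (k - 1), μ (t - i) + μ (t - k) = ∑ j ∈ Ico (t - k) t, μ j := by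
    rw [← sum_Icc_one_reflect μ hkt]
    obtain ⟨k, rfl⟩ := Nat.exists_eq_add_of_le' (by omega : 1 ≤ k)
    rw [sum_Icc_succ_top (by omega), Nat.add_sub_cancel]
  have htotal : ∑ i ∈ range (t - k), μ i + ∑ i ∈ Ico (t - k) t, μ i + ∑ i ∈ Icc t (n - k), μ i
      = 2 ^ (n - k) := by
    rw [sum_range_add_sum_Ico_add_sum_Icc μ (by omega) (by omega)]
    simp only [μ]
    exact_mod_cast Nat.sum_range_choose (n - k)
  have hpow : (2 : ℤ) ^ n = 2 ^ k * 2 ^ (n - k) := by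
    rw [← pow_add, Nat.add_sub_cancel' (by omega)]
  linear_combination 2 ^ k * (htotal + hwindow) + μ (t - k) * hinner - hpairs - hpow

/-- Binomial identity giving the classical value of the MAJORITY game with
`(n-k,k)` grouping for even `k` (Lemma 2). -/
theorem majority_classical_identity (n k : ℕ) (hn : Even n) (hk : Even k)
    (h2 : 2 ≤ k) (hkn : 2 * k ≤ n) :
    let t := n / 2
    let μ : ℕ → ℤ := fun j => (Nat.choose (n - k) j : ℤ)
    let w : ℕ → ℤ := fun j => (Nat.choose k j : ℤ)
    2 ^ k * ((∑ i ∈ range (t - k), μ i) + ∑ i ∈ Icc t (n - k), μ i)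
      + μ (t - k) * ∑ j ∈ Icc 1 (k - 1), w j
      - ∑ i ∈ Icc 1 (k - 1), μ (t - i) *
          ((∑ j ∈ range i, w j) - ∑ j ∈ Icc i k, w j)
      = 2 ^ n - 2 * μ (t - k)
        - 2 * ∑ i ∈ Icc 1 (k - 1), μ (t - i) * ∑ j ∈ range i, w j :=
  majority_classical_identity_general n k h2 hkn
end
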